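/- Let ω ∈ ℝ, let V : ℝ → ℝ and H : ℝ → ℂ be continuous, and let u : ℝ → ℂ be a C² solution of u'' − Vu = H which is weakly outgoing, i.e. there exists c ∈ ℂ with u(s) − c·e^{−iωs} → 0 and u'(s) + iω·c·e^{−iωs} → 0 as s → −∞, and there exists ε > 0 with e^{εs}·(|u(s)| + |u'(s)|) → 0 as s → +∞. Let h : ℝ → ℝ be a bounded C² function with bounded second derivative such that h'(s) → 0 as s → −∞ and as s → +∞. Assume that the functions s ↦ h·|u'|², s ↦ (h·V − (1/2)·h'')·|u|², and s ↦ h·Re(H·conj(u)) are absolutely integrable on ℝ. Then ∫_{−∞}^{∞} [ h(s)·|u'(s)|² + (h(s)·V(s) − (1/2)·h''(s))·|u(s)|² ] ds = −∫_{−∞}^{∞} h(s)·Re(H(s)·conj(u(s))) ds. -/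

import Mathlib

/-!
Along a solution of `u'' − Vu = H` the current `J = h·Re(u'·ū) − ½·h'·|u|²` has derivative
`h·|u'|² + (hV − ½h'')·|u|² + h·Re(H·ū)`, so the identity is the fundamental theorem of calculus
on `ℝ` once `J` vanishes at both ends. At `+∞` this is the exponential decay of `u` and `u'`.
At `−∞`, `u ≈ c·e^{−iωs}` and `u' ≈ −iω·c·e^{−iωs}`, so `Re(u'·ū) → Re(−iω|c|²) = 0`, while `h`
and `u` stay bounded and `h' → 0`.
-/

open MeasureTheory Filter Topology
open scoped RealInnerProductSpace

theorem Filter.IsBoundedUnder.norm_of_tendsto_sub {α E : Type*} [NormedAddCommGroup E]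
    {l : Filter α} {f F : α → E} (hF : IsBoundedUnder (· ≤ ·) l ((‖·‖) ∘ F))
    (hf : Tendsto (fun s => f s - F s) l (𝓝 0)) : IsBoundedUnder (· ≤ ·) l ((‖·‖) ∘ f) :=
  (isBoundedUnder_le_add hF hf.norm.isBoundedUnder_le).mono_le
    (Eventually.of_forall fun s => norm_le_norm_add_norm_sub' (f s) (F s))

theorem tendsto_zero_of_tendsto_exp_mul {f : ℝ → ℝ} {ε : ℝ} (hε : 0 ≤ ε) (hf : 0 ≤ f)
    (h : Tendsto (fun s => Real.exp (ε * s) * f s) atTop (𝓝 0)) : Tendsto f atTop (𝓝 0) := by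
  refine squeeze_zero' (Eventually.of_forall hf) ?_ h
  filter_upwards [eventually_ge_atTop 0] with s hs
  exact le_mul_of_one_le_left (hf s) (Real.one_le_exp (mul_nonneg hε hs))

section InnerProductSpace

variable {α E : Type*} [NormedAddCommGroup E] [InnerProductSpace ℝ E]

theorem Filter.Tendsto.inner_zero_of_isBoundedUnder {l : Filter α} {f g : α → E}
    (hf : Tendsto f l (𝓝 0)) (hg : IsBoundedUnder (· ≤ ·) l ((‖·‖) ∘ g)) :
    Tendsto (fun s => ⟪f s, g s⟫) l (𝓝 0) :=
  hf.op_zero_isBoundedUnder_le hg (fun x y => ⟪x, y⟫) norm_inner_le_norm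

theorem tendsto_inner_zero_of_tendsto_sub {l : Filter α} {f g F G : α → E}
    (hf : Tendsto (fun s => f s - F s) l (𝓝 0)) (hg : Tendsto (fun s => g s - G s) l (𝓝 0))
    (hF : IsBoundedUnder (· ≤ ·) l ((‖·‖) ∘ F)) (hG : IsBoundedUnder (· ≤ ·) l ((‖·‖) ∘ G))
    (horth : ∀ s, ⟪F s, G s⟫ = 0) : Tendsto (fun s => ⟪f s, g s⟫) l (𝓝 0) := by
  have hsplit : ∀ s, ⟪f s, g s⟫
      = ⟪f s - F s, g s - G s⟫ + ⟪f s - F s, G s⟫ + ⟪g s - G s, F s⟫ := fun s => by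
    simp only [inner_sub_left, inner_sub_right, real_inner_comm (F s), horth]
    ring
  simp only [hsplit]
  simpa using ((hf.inner hg).add (hf.inner_zero_of_isBoundedUnder hG)).add
    (hg.inner_zero_of_isBoundedUnder hF)

-- For `E = ℂ`, `⟪u, u'⟫ = Re(u'·ū)`: this is the current `h·Re(u'·ū) − ½·h'·|u|²`.
noncomputable def multiplierCurrent (h : ℝ → ℝ) (u : ℝ → E) (s : ℝ) : ℝ :=
  h s * ⟪u s, deriv u s⟫ - 1 / 2 * deriv h s * ‖u s‖ ^ 2

theorem hasDerivAt_multiplierCurrent {h : ℝ → ℝ} {u : ℝ → E} {s : ℝ}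
    (hh : DifferentiableAt ℝ h s) (hh' : DifferentiableAt ℝ (deriv h) s)
    (hu : DifferentiableAt ℝ u s) (hu' : DifferentiableAt ℝ (deriv u) s) :
    HasDerivAt (multiplierCurrent h u)
      (h s * ‖deriv u s‖ ^ 2 + h s * ⟪u s, deriv (deriv u) s⟫
        - 1 / 2 * deriv (deriv h) s * ‖u s‖ ^ 2) s := by
  refine ((hh.hasDerivAt.mul (hu.hasDerivAt.inner ℝ hu'.hasDerivAt)).sub
    ((hh'.hasDerivAt.const_mul (1 / 2)).mul hu.hasDerivAt.norm_sq)).congr_deriv ?_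
  rw [real_inner_self_eq_norm_sq]
  ring

theorem hasDerivAt_multiplierCurrent_of_deriv_deriv_sub_smul_eq {h V : ℝ → ℝ} {u H : ℝ → E}
    {s : ℝ} (hh : DifferentiableAt ℝ h s) (hh' : DifferentiableAt ℝ (deriv h) s)
    (hu : DifferentiableAt ℝ u s) (hu' : DifferentiableAt ℝ (deriv u) s)
    (heq : deriv (deriv u) s - V s • u s = H s) :
    HasDerivAt (multiplierCurrent h u)
      (h s * ‖deriv u s‖ ^ 2 + (h s * V s - 1 / 2 * deriv (deriv h) s) * ‖u s‖ ^ 2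
        + h s * ⟪u s, H s⟫) s := by
  refine (hasDerivAt_multiplierCurrent hh hh' hu hu').congr_deriv ?_
  rw [← heq, inner_sub_right, real_inner_smul_right, real_inner_self_eq_norm_sq]
  ring

theorem tendsto_multiplierCurrent_zero {l : Filter ℝ} {h : ℝ → ℝ} {u : ℝ → E}
    (hh : IsBoundedUnder (· ≤ ·) l ((‖·‖) ∘ h)) (hh' : Tendsto (deriv h) l (𝓝 0))
    (hinner : Tendsto (fun s => ⟪u s, deriv u s⟫) l (𝓝 0))
    (hu : IsBoundedUnder (· ≤ ·) l ((‖·‖) ∘ u)) :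
    Tendsto (multiplierCurrent h u) l (𝓝 0) := by
  have hu_norm : IsBoundedUnder (· ≤ ·) l ((‖·‖) ∘ fun s => ‖u s‖) := by
    simpa [Function.comp_def] using hu
  have hquad : Tendsto (fun s => 1 / 2 * (deriv h s * ‖u s‖ * ‖u s‖)) l (𝓝 0) := by
    simpa only [mul_zero] using ((hh'.zero_mul_isBoundedUnder_le hu_norm)
      |>.zero_mul_isBoundedUnder_le hu_norm).const_mul (1 / 2)
  have hJ := (isBoundedUnder_le_mul_tendsto_zero hh hinner).sub hquad
  rw [sub_zero] at hJ
  refine hJ.congr fun s => ?_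
  simp only [multiplierCurrent]
  ring

theorem tendsto_multiplierCurrent_atTop_of_exp_decay {h : ℝ → ℝ} {u : ℝ → E} {ε : ℝ}
    (hh : IsBoundedUnder (· ≤ ·) atTop ((‖·‖) ∘ h)) (hh' : Tendsto (deriv h) atTop (𝓝 0))
    (hε : 0 ≤ ε)
    (hu : Tendsto (fun s => Real.exp (ε * s) * (‖u s‖ + ‖deriv u s‖)) atTop (𝓝 0)) :
    Tendsto (multiplierCurrent h u) atTop (𝓝 0) := by
  have hsum := tendsto_zero_of_tendsto_exp_mul hε (fun s => by positivity) hu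
  have hu0 : Tendsto u atTop (𝓝 0) := tendsto_zero_iff_norm_tendsto_zero.2 <|
    squeeze_zero (fun s => norm_nonneg _) (fun s => le_add_of_nonneg_right (norm_nonneg _)) hsum
  have hu'0 : Tendsto (deriv u) atTop (𝓝 0) := tendsto_zero_iff_norm_tendsto_zero.2 <|
    squeeze_zero (fun s => norm_nonneg _) (fun s => le_add_of_nonneg_left (norm_nonneg _)) hsum
  exact tendsto_multiplierCurrent_zero hh hh' (by simpa using hu0.inner (𝕜 := ℝ) hu'0)
    hu0.norm.isBoundedUnder_le

theorem integral_multiplier_identity {h V : ℝ → ℝ} {u H : ℝ → E}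
    (hh : Differentiable ℝ h) (hh' : Differentiable ℝ (deriv h))
    (hu : Differentiable ℝ u) (hu' : Differentiable ℝ (deriv u))
    (heq : ∀ s, deriv (deriv u) s - V s • u s = H s)
    (hbot : Tendsto (multiplierCurrent h u) atBot (𝓝 0))
    (htop : Tendsto (multiplierCurrent h u) atTop (𝓝 0))
    (hint : Integrable fun s =>
      h s * ‖deriv u s‖ ^ 2 + (h s * V s - 1 / 2 * deriv (deriv h) s) * ‖u s‖ ^ 2)
    (hintH : Integrable fun s => h s * ⟪u s, H s⟫) :
    ∫ s, (h s * ‖deriv u s‖ ^ 2 + (h s * V s - 1 / 2 * deriv (deriv h) s) * ‖u s‖ ^ 2)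
      = -∫ s, h s * ⟪u s, H s⟫ := by
  have hftc := integral_of_hasDerivAt_of_tendsto (fun s =>
    hasDerivAt_multiplierCurrent_of_deriv_deriv_sub_smul_eq (hh s) (hh' s) (hu s) (hu' s)
      (heq s)) (hint.add hintH) hbot htop
  rw [integral_add hint hintH, sub_zero] at hftc
  linarith

end InnerProductSpace

theorem tendsto_multiplierCurrent_atBot_of_outgoing {h : ℝ → ℝ} {u : ℝ → ℂ} {c : ℂ} {ω : ℝ}
    (hh : IsBoundedUnder (· ≤ ·) atBot ((‖·‖) ∘ h)) (hh' : Tendsto (deriv h) atBot (𝓝 0))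
    (hu : Tendsto (fun s : ℝ => u s - c * Complex.exp (-Complex.I * ω * s)) atBot (𝓝 0))
    (hu' : Tendsto (fun s : ℝ => deriv u s + Complex.I * ω * c * Complex.exp (-Complex.I * ω * s))
      atBot (𝓝 0)) :
    Tendsto (multiplierCurrent h u) atBot (𝓝 0) := by
  set w : ℝ → ℂ := fun s => c * Complex.exp (-Complex.I * ω * s)
  have hw : IsBoundedUnder (· ≤ ·) atBot ((‖·‖) ∘ w) :=
    isBoundedUnder_of ⟨‖c‖, fun s => by simp [w, Complex.norm_exp]⟩
  have hw' : IsBoundedUnder (· ≤ ·) atBot ((‖·‖) ∘ fun s => -(Complex.I * ω * w s)) :=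
    isBoundedUnder_of ⟨|ω| * ‖c‖, fun s => by simp [w, Complex.norm_exp]⟩
  have horth : ∀ z : ℂ, ⟪z, -(Complex.I * ω * z)⟫ = 0 := fun z => by
    simp [Complex.inner]
    ring
  refine tendsto_multiplierCurrent_zero hh hh'
    (tendsto_inner_zero_of_tendsto_sub hu ?_ hw hw' fun s => horth (w s))
    (hw.norm_of_tendsto_sub hu)
  simpa only [w, sub_neg_eq_add, mul_assoc] using hu'

theorem statement3 (ω : ℝ) (V : ℝ → ℝ) (H u : ℝ → ℂ) (h : ℝ → ℝ)
    (hu : ContDiff ℝ 2 u)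
    (heq : ∀ s : ℝ, deriv (deriv u) s - (V s : ℂ) * u s = H s)
    (hout1 : ∃ c : ℂ,
      Tendsto (fun s : ℝ => u s - c * Complex.exp (-Complex.I * (ω : ℂ) * (s : ℂ)))
        atBot (nhds 0) ∧
      Tendsto (fun s : ℝ =>
          deriv u s + Complex.I * (ω : ℂ) * c * Complex.exp (-Complex.I * (ω : ℂ) * (s : ℂ)))
        atBot (nhds 0))
    (hout2 : ∃ ε : ℝ, 0 < ε ∧
      Tendsto (fun s : ℝ => Real.exp (ε * s) * (‖u s‖ + ‖deriv u s‖)) atTop (nhds 0))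
    (hhC2 : ContDiff ℝ 2 h)
    (hhbdd : ∃ B : ℝ, ∀ s : ℝ, |h s| ≤ B)
    (hh'bot : Tendsto (deriv h) atBot (nhds 0))
    (hh'top : Tendsto (deriv h) atTop (nhds 0))
    (hint1 : Integrable (fun s : ℝ => h s * ‖deriv u s‖ ^ 2))
    (hint2 : Integrable (fun s : ℝ =>
      (h s * V s - (1 / 2) * deriv (deriv h) s) * ‖u s‖ ^ 2))
    (hint3 : Integrable (fun s : ℝ => h s * (H s * (starRingEnd ℂ) (u s)).re)) :
    ∫ s : ℝ, (h s * ‖deriv u s‖ ^ 2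
        + (h s * V s - (1 / 2) * deriv (deriv h) s) * ‖u s‖ ^ 2)
      = -∫ s : ℝ, h s * (H s * (starRingEnd ℂ) (u s)).re := by
  obtain ⟨c, hu_bot, hu'_bot⟩ := hout1
  obtain ⟨ε, hε, hu_top⟩ := hout2
  have hh_bdd : ∀ l : Filter ℝ, IsBoundedUnder (· ≤ ·) l ((‖·‖) ∘ h) := fun l =>
    isBoundedUnder_of (by simpa using hhbdd)
  have hinner : ∀ s, (H s * (starRingEnd ℂ) (u s)).re = ⟪u s, H s⟫ := fun s =>
    (Complex.inner _ _).symm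
  simp only [hinner] at hint3 ⊢
  exact integral_multiplier_identity (hhC2.differentiable two_ne_zero)
    hhC2.differentiable_deriv_two (hu.differentiable two_ne_zero) hu.differentiable_deriv_two
    (fun s => by rw [Complex.real_smul, heq])
    (tendsto_multiplierCurrent_atBot_of_outgoing (hh_bdd atBot) hh'bot hu_bot hu'_bot)
    (tendsto_multiplierCurrent_atTop_of_exp_decay (hh_bdd atTop) hh'top hε.le hu_top)
    (hint1.add hint2) hint3
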